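/- Theorem 2.1 (conservation of the discrete Hamiltonian): If (u_h, w_h) is a solution of the semi-discrete DG scheme for the nonlinear biharmonic Schrödinger equation with numerical fluxes given by parameters α₁, α₂ ∈ [0,1], where in addition F : [0,∞) → ℝ is differentiable with derivative F′ and F ≥ 0, and t ↦ u_h(t), w_h(t) are continuously differentiable in t (so the second scheme equation may be differentiated in time), then the discrete Hamiltonian H_h(t) = ∫_I (|w_h(x,t)|² + F(|u_h(x,t)|²)) dx satisfies H_h(t) = H_h(0) for all t ≥ 0. -/

import Mathlib

/-!
Test the first scheme equation with `conj ∂ₜu_h` and the time derivative of the second with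
`conj w_h`, and add real parts. On each cell the volume terms become `½ dH_h/dt`: the term
`i |∂ₜu_h|²` is purely imaginary, and `∫ w_h (conj ∂ₜu_h)''`, `∫ ∂ₜu_h conj w_h''` are complex
conjugate up to the boundary term of integrating by parts twice. What remains is a sum of
one-sided interface terms; since `û` is paired with `w̃ₓ` and `ûₓ` with `w̃` through the same
parameter, the real parts of the two contributions at each interface cancel, for any `α₁, α₂`.
Hence `dH_h/dt = 0`.

All time regularity is derived from the pointwise hypotheses: a polynomial of degree `≤ q`
depends linearly on its values at `0, …, q`, so every linear functional of `u_h(t)` (an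
integral against a test function, a trace of a derivative) is differentiable in `t`.
-/

open MeasureTheory

noncomputable section

/-- Minus-side (left) trace of a piecewise polynomial `v` at the interface
`x_{j+1/2}` (the right endpoint of cell `I_j`).  Cells are indexed by `Fin (n+1)`
and mesh points by `Fin (n+2)`. -/
def trMinus (n : ℕ) (x : Fin (n + 2) → ℝ) (v : Fin (n + 1) → Polynomial ℂ)
    (j : Fin (n + 1)) : ℂ :=
  (v j).eval ((x j.succ : ℝ) : ℂ)

/-- Plus-side (right) trace of a piecewise polynomial `v` at the interface
`x_{j+1/2}`: the value of the polynomial of the next cell (periodically) at its left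
endpoint.  For the last interface this is cell `0` at `x_a`, realizing the periodic
identification of `x_{1/2}` and `x_{n+1/2}`. -/
def trPlus (n : ℕ) (x : Fin (n + 2) → ℝ) (v : Fin (n + 1) → Polynomial ℂ)
    (j : Fin (n + 1)) : ℂ :=
  (v (j + 1)).eval ((x (j + 1).castSucc : ℝ) : ℂ)

/-- Numerical flux `û = α₁ u_h⁺ + (1−α₁) u_h⁻` at the interface `x_{j+1/2}`. -/
def fluxUhat (n : ℕ) (x : Fin (n + 2) → ℝ) (α₁ : ℝ)
    (uh : Fin (n + 1) → Polynomial ℂ) (j : Fin (n + 1)) : ℂ :=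
  (α₁ : ℂ) * trPlus n x uh j + (1 - (α₁ : ℂ)) * trMinus n x uh j

/-- Numerical flux `w̃ₓ = (1−α₁) (w_h)ₓ⁺ + α₁ (w_h)ₓ⁻` at the interface `x_{j+1/2}`. -/
def fluxWx (n : ℕ) (x : Fin (n + 2) → ℝ) (α₁ : ℝ)
    (wh : Fin (n + 1) → Polynomial ℂ) (j : Fin (n + 1)) : ℂ :=
  (1 - (α₁ : ℂ)) * trPlus n x (fun k => (wh k).derivative) j
    + (α₁ : ℂ) * trMinus n x (fun k => (wh k).derivative) j

/-- Numerical flux `ûₓ = α₂ (u_h)ₓ⁺ + (1−α₂) (u_h)ₓ⁻` at the interface `x_{j+1/2}`. -/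
def fluxUx (n : ℕ) (x : Fin (n + 2) → ℝ) (α₂ : ℝ)
    (uh : Fin (n + 1) → Polynomial ℂ) (j : Fin (n + 1)) : ℂ :=
  (α₂ : ℂ) * trPlus n x (fun k => (uh k).derivative) j
    + (1 - (α₂ : ℂ)) * trMinus n x (fun k => (uh k).derivative) j

/-- Numerical flux `w̃ = (1−α₂) w_h⁺ + α₂ w_h⁻` at the interface `x_{j+1/2}`. -/
def fluxWtilde (n : ℕ) (x : Fin (n + 2) → ℝ) (α₂ : ℝ)
    (wh : Fin (n + 1) → Polynomial ℂ) (j : Fin (n + 1)) : ℂ :=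
  (1 - (α₂ : ℂ)) * trPlus n x wh j + (α₂ : ℂ) * trMinus n x wh j

open Polynomial Set
open scoped ComplexConjugate InnerProductSpace

theorem continuous_eval_ofReal (p : ℂ[X]) : Continuous fun y : ℝ => p.eval (y : ℂ) :=
  p.continuous.comp Complex.continuous_ofReal

theorem eval_map_conj_ofReal (p : ℂ[X]) (y : ℝ) :
    (p.map (starRingEnd ℂ)).eval (y : ℂ) = conj (p.eval (y : ℂ)) := by
  simpa using p.eval_map_apply (starRingEnd ℂ) (y : ℂ)

theorem trPlus_sub_one {n : ℕ} (x : Fin (n + 2) → ℝ) (v : Fin (n + 1) → ℂ[X])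
    (j : Fin (n + 1)) : trPlus n x v (j - 1) = (v j).eval (x j.castSucc : ℂ) := by
  rw [trPlus, sub_add_cancel]

theorem integral_eval_derivative (p : ℂ[X]) (a b : ℝ) :
    ∫ y in a..b, p.derivative.eval (y : ℂ) = p.eval (b : ℂ) - p.eval (a : ℂ) :=
  intervalIntegral.integral_eq_sub_of_hasDerivAt
    (fun y _ => (p.hasDerivAt (y : ℂ)).comp_ofReal)
    ((continuous_eval_ofReal _).intervalIntegrable _ _)

theorem integral_eval_mul_derivative_derivative_sub (p m : ℂ[X]) (a b : ℝ) :
    ∫ y in a..b, (p.eval (y : ℂ) * m.derivative.derivative.eval (y : ℂ)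
        - p.derivative.derivative.eval (y : ℂ) * m.eval (y : ℂ)) =
      (p.eval (b : ℂ) * m.derivative.eval (b : ℂ) - p.derivative.eval (b : ℂ) * m.eval (b : ℂ))
        - (p.eval (a : ℂ) * m.derivative.eval (a : ℂ)
          - p.derivative.eval (a : ℂ) * m.eval (a : ℂ)) := by
  have h := integral_eval_derivative (p * m.derivative - p.derivative * m) a b
  simp only [eval_sub, eval_mul] at h
  rw [← h]
  refine intervalIntegral.integral_congr fun y _ => ?_
  simp only [derivative_sub, derivative_mul, eval_sub, eval_add, eval_mul]
  ring

section Interpolation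

variable {K M : Type*} [Field K] [CharZero K] [AddCommGroup M] [Module K M] {q : ℕ}

theorem LinearMap.apply_eq_sum_eval_natCast_smul (O : K[X] →ₗ[K] M) {f : K[X]}
    (hf : f.natDegree ≤ q) :
    O f = ∑ i ∈ Finset.range (q + 1),
      f.eval (i : K) • O (Lagrange.basis (Finset.range (q + 1)) Nat.cast i) := by
  have hinj : Set.InjOn (Nat.cast : ℕ → K) (Finset.range (q + 1)) :=
    fun a _ b _ h => Nat.cast_injective h
  have hdeg : f.degree < (Finset.range (q + 1)).card := by
    rw [Finset.card_range]
    exact f.degree_le_natDegree.trans_lt (by exact_mod_cast Nat.lt_succ_of_le hf)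
  conv_lhs => rw [Lagrange.eq_interpolate hinj hdeg]
  simp only [Lagrange.interpolate_apply, map_sum, ← smul_eq_C_mul, O.map_smul]

end Interpolation

section TimeRegularity

variable {E : Type*} [NormedAddCommGroup E] [NormedSpace ℂ E] {q : ℕ} {p : ℝ → ℂ[X]}
  {s : Set ℝ}

theorem hasDerivWithinAt_map_of_eval {p' : ℂ[X]} {t : ℝ} (hp : ∀ r ∈ s, (p r).natDegree ≤ q)
    (hp' : p'.natDegree ≤ q) (ht : t ∈ s)
    (hd : ∀ y : ℝ, HasDerivWithinAt (fun r => (p r).eval (y : ℂ)) (p'.eval (y : ℂ)) s t)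
    (O : ℂ[X] →ₗ[ℂ] E) : HasDerivWithinAt (fun r => O (p r)) (O p') s t := by
  rw [O.apply_eq_sum_eval_natCast_smul hp']
  refine (HasDerivWithinAt.fun_sum fun i _ => ?_).congr_of_mem
    (fun r hr => O.apply_eq_sum_eval_natCast_smul (hp r hr)) ht
  simpa using (hd i).smul_const (O (Lagrange.basis (Finset.range (q + 1)) Nat.cast i))

theorem continuousOn_eval_prod (hp : ∀ r ∈ s, (p r).natDegree ≤ q)
    (hc : ∀ y : ℝ, ContinuousOn (fun r => (p r).eval (y : ℂ)) s) :
    ContinuousOn (fun z : ℝ × ℝ => (p z.1).eval (z.2 : ℂ)) (s ×ˢ univ) := by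
  refine (continuousOn_finsetSum (Finset.range (q + 1)) fun i _ =>
    ((hc i).comp continuousOn_fst fun z hz => hz.1).smul
      ((continuous_eval_ofReal (Lagrange.basis (Finset.range (q + 1)) Nat.cast i)).comp
        continuous_snd).continuousOn).congr fun z hz => ?_
  simpa using (leval (z.2 : ℂ)).apply_eq_sum_eval_natCast_smul (hp z.1 hz.1)

end TimeRegularity

def integralMulEval (a b : ℝ) (ψ : ℂ[X]) : ℂ[X] →ₗ[ℂ] ℂ where
  toFun p := ∫ y in a..b, p.eval (y : ℂ) * ψ.eval (y : ℂ)
  map_add' p r := by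
    simp only [eval_add, add_mul]
    exact intervalIntegral.integral_add
      (((continuous_eval_ofReal p).mul (continuous_eval_ofReal ψ)).intervalIntegrable _ _)
      (((continuous_eval_ofReal r).mul (continuous_eval_ofReal ψ)).intervalIntegrable _ _)
  map_smul' c p := by
    simp only [eval_smul, smul_eq_mul, mul_assoc, RingHom.id_apply]
    exact intervalIntegral.integral_const_mul c _

def FirstSchemeEq (n q : ℕ) (x : Fin (n + 2) → ℝ) (α₁ α₂ : ℝ) (F' : ℝ → ℝ)
    (u w ut : Fin (n + 1) → ℂ[X]) : Prop :=
  ∀ j : Fin (n + 1), ∀ φ : ℂ[X], φ.natDegree ≤ q →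
    (∫ y in x j.castSucc..x j.succ,
        Complex.I * (ut j).eval (y : ℂ) * φ.eval (y : ℂ)
          + (w j).eval (y : ℂ) * φ.derivative.derivative.eval (y : ℂ)
          + (u j).eval (y : ℂ) * (F' (‖(u j).eval (y : ℂ)‖ ^ 2) : ℂ) * φ.eval (y : ℂ)) =
      - fluxWx n x α₁ w j * φ.eval (x j.succ : ℂ)
        + fluxWx n x α₁ w (j - 1) * φ.eval (x j.castSucc : ℂ)
        + fluxWtilde n x α₂ w j * φ.derivative.eval (x j.succ : ℂ)
        - fluxWtilde n x α₂ w (j - 1) * φ.derivative.eval (x j.castSucc : ℂ)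

def SecondSchemeEq (n q : ℕ) (x : Fin (n + 2) → ℝ) (α₁ α₂ : ℝ) (u w : Fin (n + 1) → ℂ[X]) :
    Prop :=
  ∀ j : Fin (n + 1), ∀ ψ : ℂ[X], ψ.natDegree ≤ q →
    (∫ y in x j.castSucc..x j.succ,
        (w j).eval (y : ℂ) * ψ.eval (y : ℂ)
          - (u j).eval (y : ℂ) * ψ.derivative.derivative.eval (y : ℂ)) =
      fluxUx n x α₂ u j * ψ.eval (x j.succ : ℂ)
        - fluxUx n x α₂ u (j - 1) * ψ.eval (x j.castSucc : ℂ)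
        - fluxUhat n x α₁ u j * ψ.derivative.eval (x j.succ : ℂ)
        + fluxUhat n x α₁ u (j - 1) * ψ.derivative.eval (x j.castSucc : ℂ)

section FluxDerivative

variable {n : ℕ} {x : Fin (n + 2) → ℝ} {s : Set ℝ} {t : ℝ} {p : ℝ → Fin (n + 1) → ℂ[X]}
  {p' : Fin (n + 1) → ℂ[X]}

theorem hasDerivWithinAt_fluxUx
    (hp : ∀ k (O : ℂ[X] →ₗ[ℂ] ℂ), HasDerivWithinAt (fun r => O (p r k)) (O (p' k)) s t)
    (α : ℝ) (k : Fin (n + 1)) :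
    HasDerivWithinAt (fun r => fluxUx n x α (p r) k) (fluxUx n x α p' k) s t :=
  ((hp _ ((leval _).comp derivative)).const_mul _).add
    ((hp _ ((leval _).comp derivative)).const_mul _)

theorem hasDerivWithinAt_fluxUhat
    (hp : ∀ k (O : ℂ[X] →ₗ[ℂ] ℂ), HasDerivWithinAt (fun r => O (p r k)) (O (p' k)) s t)
    (α : ℝ) (k : Fin (n + 1)) :
    HasDerivWithinAt (fun r => fluxUhat n x α (p r) k) (fluxUhat n x α p' k) s t :=
  ((hp _ (leval _)).const_mul _).add ((hp _ (leval _)).const_mul _)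

end FluxDerivative

theorem SecondSchemeEq.of_hasDerivWithinAt {n q : ℕ} {x : Fin (n + 2) → ℝ} {α₁ α₂ : ℝ}
    {u w : ℝ → Fin (n + 1) → ℂ[X]} {ut wt : Fin (n + 1) → ℂ[X]} {s : Set ℝ} {t : ℝ}
    (hs : UniqueDiffWithinAt ℝ s t) (ht : t ∈ s)
    (hu : ∀ k (O : ℂ[X] →ₗ[ℂ] ℂ), HasDerivWithinAt (fun r => O (u r k)) (O (ut k)) s t)
    (hw : ∀ k (O : ℂ[X] →ₗ[ℂ] ℂ), HasDerivWithinAt (fun r => O (w r k)) (O (wt k)) s t)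
    (h : ∀ r ∈ s, SecondSchemeEq n q x α₁ α₂ (u r) (w r)) :
    SecondSchemeEq n q x α₁ α₂ ut wt := by
  intro j ψ hψ
  have hsplit : ∀ uj wj : ℂ[X], (∫ y in x j.castSucc..x j.succ,
      wj.eval (y : ℂ) * ψ.eval (y : ℂ) - uj.eval (y : ℂ) * ψ.derivative.derivative.eval (y : ℂ)) =
      integralMulEval _ _ ψ wj - integralMulEval _ _ ψ.derivative.derivative uj := fun _ _ =>
    intervalIntegral.integral_sub
      (((continuous_eval_ofReal _).mul (continuous_eval_ofReal _)).intervalIntegrable _ _)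
      (((continuous_eval_ofReal _).mul (continuous_eval_ofReal _)).intervalIntegrable _ _)
  have hlhs := ((hw j (integralMulEval _ _ ψ)).sub (hu j (integralMulEval _ _ _))).congr_of_mem
    (fun r hr => ((hsplit _ _).symm.trans (h r hr j ψ hψ)).symm) ht
  have hUx := hasDerivWithinAt_fluxUx (x := x) hu α₂
  have hUhat := hasDerivWithinAt_fluxUhat (x := x) hu α₁
  have hrhs := ((((hUx j).mul_const (ψ.eval (x j.succ : ℂ))).sub
    ((hUx (j - 1)).mul_const (ψ.eval (x j.castSucc : ℂ)))).sub
    ((hUhat j).mul_const (ψ.derivative.eval (x j.succ : ℂ)))).add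
    ((hUhat (j - 1)).mul_const (ψ.derivative.eval (x j.castSucc : ℂ)))
  rw [hsplit]
  exact hs.eq_deriv _ hlhs hrhs

def hamiltonianDensity {E : Type*} [NormedAddCommGroup E] (F : ℝ → ℝ) (u w : E) : ℝ :=
  ‖w‖ ^ 2 + F (‖u‖ ^ 2)

theorem Continuous.hamiltonianDensity {E X : Type*} [NormedAddCommGroup E] [TopologicalSpace X]
    {F : ℝ → ℝ} (hF : ContinuousOn F (Ici 0)) {u w : X → E} (hu : Continuous u)
    (hw : Continuous w) : Continuous fun z => _root_.hamiltonianDensity F (u z) (w z) :=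
  (hw.norm.pow 2).add (hF.comp_continuous (hu.norm.pow 2) fun _ => mem_Ici.2 (sq_nonneg _))

section Density

variable {E : Type*} [NormedAddCommGroup E] [InnerProductSpace ℝ E]

def hamiltonianDensityRate (F' : ℝ → ℝ) (u w u' w' : E) : ℝ :=
  2 * ⟪w, w'⟫_ℝ + F' (‖u‖ ^ 2) * (2 * ⟪u, u'⟫_ℝ)

theorem HasDerivWithinAt.hamiltonianDensity {F F' : ℝ → ℝ}
    (hF : ∀ σ ∈ Ici (0 : ℝ), HasDerivWithinAt F (F' σ) (Ici 0) σ) {u w : ℝ → E} {u' w' : E}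
    {s : Set ℝ} {r : ℝ} (hu : HasDerivWithinAt u u' s r) (hw : HasDerivWithinAt w w' s r) :
    HasDerivWithinAt (fun ρ => _root_.hamiltonianDensity F (u ρ) (w ρ))
      (hamiltonianDensityRate F' (u r) (w r) u' w') s r :=
  hw.norm_sq.add <| (hF (‖u r‖ ^ 2) (mem_Ici.2 (sq_nonneg _))).comp r hu.norm_sq
    fun _ _ => mem_Ici.2 (sq_nonneg _)

theorem ContinuousOn.hamiltonianDensityRate {X : Type*} [TopologicalSpace X] {F' : ℝ → ℝ}
    (hF' : ContinuousOn F' (Ici 0)) {u w u' w' : X → E} {S : Set X} (hu : ContinuousOn u S)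
    (hw : ContinuousOn w S) (hu' : ContinuousOn u' S) (hw' : ContinuousOn w' S) :
    ContinuousOn (fun z => _root_.hamiltonianDensityRate F' (u z) (w z) (u' z) (w' z)) S :=
  (continuousOn_const.mul (hw.inner hw')).add <|
    (hF'.comp (hu.norm.pow 2) fun _ _ => mem_Ici.2 (sq_nonneg _)).mul
      (continuousOn_const.mul (hu.inner hu'))

end Density

/-- The flux terms of the two scheme equations tested with `conj ut` and `conj w`, minus the
boundary term of `∫ w (conj ut)''` integrated by parts twice, at interface `k` as seen from the
side `tr` (`trMinus` or `trPlus`). -/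
def interfaceTerm (n : ℕ) (x : Fin (n + 2) → ℝ) (α₁ α₂ : ℝ) (w ut : Fin (n + 1) → ℂ[X])
    (tr : (Fin (n + 1) → ℂ[X]) → Fin (n + 1) → ℂ) (k : Fin (n + 1)) : ℂ :=
  -fluxWx n x α₁ w k * conj (tr ut k)
    + fluxWtilde n x α₂ w k * conj (tr (fun i => (ut i).derivative) k)
    + fluxUx n x α₂ ut k * conj (tr w k)
    - fluxUhat n x α₁ ut k * conj (tr (fun i => (w i).derivative) k)
    - (tr w k * conj (tr (fun i => (ut i).derivative) k)
      - tr (fun i => (w i).derivative) k * conj (tr ut k))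

theorem re_interfaceTerm_trMinus_sub_trPlus {n : ℕ} {x : Fin (n + 2) → ℝ} {α₁ α₂ : ℝ}
    (w ut : Fin (n + 1) → ℂ[X]) (k : Fin (n + 1)) :
    (interfaceTerm n x α₁ α₂ w ut (trMinus n x) k
      - interfaceTerm n x α₁ α₂ w ut (trPlus n x) k).re = 0 := by
  set z := interfaceTerm n x α₁ α₂ w ut (trMinus n x) k
    - interfaceTerm n x α₁ α₂ w ut (trPlus n x) k
  have h : z + conj z = 0 := by
    simp only [z, interfaceTerm, fluxWx, fluxWtilde, fluxUx, fluxUhat, map_add, map_sub,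
      map_mul, map_neg, map_one, Complex.conj_conj, Complex.conj_ofReal]
    ring
  rw [Complex.add_conj, Complex.ofReal_eq_zero] at h
  linarith

/-- `h₁` and `h₂` are the two scheme equations on one cell, tested with `conj ut` and `conj w`. -/
theorem integral_two_inner_add_mul_eq_re {a b : ℝ} {u w ut wt : ℂ[X]} {f : ℝ → ℝ}
    (hf : Continuous f) {R₁ R₂ : ℂ}
    (h₁ : ∫ y in a..b, (Complex.I * ut.eval (y : ℂ) * conj (ut.eval (y : ℂ))
      + w.eval (y : ℂ) * conj (ut.derivative.derivative.eval (y : ℂ))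
      + u.eval (y : ℂ) * (f y : ℂ) * conj (ut.eval (y : ℂ))) = R₁)
    (h₂ : ∫ y in a..b, (wt.eval (y : ℂ) * conj (w.eval (y : ℂ))
      - ut.eval (y : ℂ) * conj (w.derivative.derivative.eval (y : ℂ))) = R₂) :
    ∫ y in a..b, (2 * ⟪w.eval (y : ℂ), wt.eval (y : ℂ)⟫_ℝ
        + f y * (2 * ⟪u.eval (y : ℂ), ut.eval (y : ℂ)⟫_ℝ)) =
      2 * (R₁ + R₂ - ((w.eval (b : ℂ) * conj (ut.derivative.eval (b : ℂ))
          - w.derivative.eval (b : ℂ) * conj (ut.eval (b : ℂ)))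
        - (w.eval (a : ℂ) * conj (ut.derivative.eval (a : ℂ))
          - w.derivative.eval (a : ℂ) * conj (ut.eval (a : ℂ))))).re := by
  have hB := integral_eval_mul_derivative_derivative_sub w (ut.map (starRingEnd ℂ)) a b
  simp only [derivative_map, eval_map_conj_ofReal] at hB
  have hre : ∀ g : ℝ → ℂ, Continuous g → (∫ y in a..b, g y).re = ∫ y in a..b, (g y).re :=
    fun g hg => (Complex.reCLM.intervalIntegral_comp_comm (hg.intervalIntegrable a b)).symm
  rw [← h₁, ← h₂, ← hB, ← intervalIntegral.integral_add, ← intervalIntegral.integral_sub, hre,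
    ← intervalIntegral.integral_const_mul]
  · refine intervalIntegral.integral_congr fun y _ => ?_
    simp only [Complex.inner, Complex.add_re, Complex.sub_re, Complex.mul_re, Complex.mul_im,
      Complex.conj_re, Complex.conj_im, Complex.ofReal_re, Complex.ofReal_im, Complex.I_re,
      Complex.I_im]
    ring
  all_goals first
    | fun_prop
    | exact Continuous.intervalIntegrable (by fun_prop) _ _

theorem sum_integral_hamiltonianDensityRate_eq_zero {n q : ℕ} {x : Fin (n + 2) → ℝ} {α₁ α₂ : ℝ}
    {F' : ℝ → ℝ} (hF' : ContinuousOn F' (Ici 0)) {u w ut wt : Fin (n + 1) → ℂ[X]}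
    (hut : ∀ j, (ut j).natDegree ≤ q) (hw : ∀ j, (w j).natDegree ≤ q)
    (h₁ : FirstSchemeEq n q x α₁ α₂ F' u w ut) (h₂ : SecondSchemeEq n q x α₁ α₂ ut wt) :
    ∑ j, ∫ y in x j.castSucc..x j.succ, hamiltonianDensityRate F' ((u j).eval (y : ℂ))
      ((w j).eval (y : ℂ)) ((ut j).eval (y : ℂ)) ((wt j).eval (y : ℂ)) = 0 := by
  unfold hamiltonianDensityRate
  have hcell : ∀ j, ∫ y in x j.castSucc..x j.succ,
      (2 * ⟪(w j).eval (y : ℂ), (wt j).eval (y : ℂ)⟫_ℝ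
        + F' (‖(u j).eval (y : ℂ)‖ ^ 2) * (2 * ⟪(u j).eval (y : ℂ), (ut j).eval (y : ℂ)⟫_ℝ)) =
      2 * ((interfaceTerm n x α₁ α₂ w ut (trMinus n x) j).re
        - (interfaceTerm n x α₁ α₂ w ut (trPlus n x) (j - 1)).re) := by
    intro j
    have e₁ := h₁ j ((ut j).map (starRingEnd ℂ)) (natDegree_map_le.trans (hut j))
    have e₂ := h₂ j ((w j).map (starRingEnd ℂ)) (natDegree_map_le.trans (hw j))
    simp only [derivative_map, eval_map_conj_ofReal] at e₁ e₂
    have hf : Continuous fun y : ℝ => F' (‖(u j).eval (y : ℂ)‖ ^ 2) :=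
      hF'.comp_continuous (by fun_prop) fun y => mem_Ici.2 (sq_nonneg _)
    rw [integral_two_inner_add_mul_eq_re hf e₁ e₂, ← Complex.sub_re]
    congr 2
    simp only [interfaceTerm, trMinus, trPlus_sub_one x]
    ring
  have hshift : ∑ j, (interfaceTerm n x α₁ α₂ w ut (trPlus n x) (j - 1)).re =
      ∑ j, (interfaceTerm n x α₁ α₂ w ut (trPlus n x) j).re :=
    Fintype.sum_equiv (Equiv.subRight 1) _ _ fun _ => rfl
  rw [Finset.sum_congr rfl fun j _ => hcell j, ← Finset.mul_sum, Finset.sum_sub_distrib, hshift,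
    ← Finset.sum_sub_distrib]
  simp only [← Complex.sub_re, re_interfaceTerm_trMinus_sub_trPlus, Finset.sum_const_zero,
    mul_zero]

section TimeIntegration

variable {E : Type*} [NormedAddCommGroup E] [NormedSpace ℝ E]
  {g d : ℝ → ℝ → E} {a b s t : ℝ}

theorem intervalIntegrable_intervalIntegral_of_continuousOn
    (hd : ContinuousOn (Function.uncurry d) (uIcc s t ×ˢ uIcc a b)) :
    IntervalIntegrable (fun r => ∫ y in a..b, d r y) volume s t := by
  have h : Integrable (Function.uncurry d)
      ((volume.restrict (uIoc s t)).prod (volume.restrict (uIoc a b))) := by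
    rw [Measure.prod_restrict, ← Measure.volume_eq_prod]
    exact (hd.integrableOn_compact (isCompact_uIcc.prod isCompact_uIcc)).mono_set
      (prod_mono uIoc_subset_uIcc uIoc_subset_uIcc)
  rw [intervalIntegrable_iff]
  simp_rw [intervalIntegral.intervalIntegral_eq_integral_uIoc]
  exact h.integral_prod_left.smul _

theorem intervalIntegral_sub_eq_intervalIntegral_intervalIntegral [CompleteSpace E] (hst : s ≤ t)
    (hg : ∀ y ∈ uIcc a b, ContinuousOn (g · y) (Icc s t))
    (hgd : ∀ y ∈ uIcc a b, ∀ r ∈ Ioo s t, HasDerivAt (g · y) (d r y) r)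
    (hd : ContinuousOn (Function.uncurry d) (Icc s t ×ˢ uIcc a b))
    (hgs : IntervalIntegrable (g s) volume a b) (hgt : IntervalIntegrable (g t) volume a b) :
    (∫ y in a..b, g t y) - ∫ y in a..b, g s y = ∫ r in s..t, ∫ y in a..b, d r y := by
  rw [← intervalIntegral.integral_sub hgt hgs, intervalIntegral_intervalIntegral_swap]
  · refine intervalIntegral.integral_congr fun y hy => ?_
    have hdy : ContinuousOn (d · y) (Icc s t) :=
      hd.comp (Continuous.prodMk_left y).continuousOn fun r hr => ⟨hr, hy⟩
    exact (intervalIntegral.integral_eq_sub_of_hasDerivAt_of_le hst (hg y hy) (hgd y hy)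
      (hdy.intervalIntegrable_of_Icc hst)).symm
  · rw [uIoc_of_le hst]
    exact (hd.integrableOn_compact (isCompact_Icc.prod isCompact_uIcc)).mono_set
      (prod_mono Ioc_subset_Icc_self uIoc_subset_uIcc)

end TimeIntegration

theorem sum_intervalIntegral_eq_of_sum_intervalIntegral_deriv_eq_zero {E ι : Type*}
    [NormedAddCommGroup E] [NormedSpace ℝ E] [CompleteSpace E] [Fintype ι] {a b : ι → ℝ}
    {g d : ι → ℝ → ℝ → E} {t : ℝ} (ht : 0 ≤ t)
    (hg : ∀ i y, ∀ r ≥ 0, HasDerivWithinAt (g i · y) (d i r y) (Ici 0) r)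
    (hd : ∀ i, ContinuousOn (Function.uncurry (d i)) (Ici 0 ×ˢ univ))
    (hgi : ∀ i, ∀ r ≥ 0, IntervalIntegrable (g i r) volume (a i) (b i))
    (hsum : ∀ r ≥ 0, ∑ i, ∫ y in a i..b i, d i r y = 0) :
    ∑ i, ∫ y in a i..b i, g i t y = ∑ i, ∫ y in a i..b i, g i 0 y := by
  have hd' : ∀ i, ContinuousOn (Function.uncurry (d i)) (Icc 0 t ×ˢ uIcc (a i) (b i)) :=
    fun i => (hd i).mono (prod_mono Icc_subset_Ici_self (subset_univ _))
  have hcell : ∀ i, (∫ y in a i..b i, g i t y) - ∫ y in a i..b i, g i 0 y =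
      ∫ r in 0..t, ∫ y in a i..b i, d i r y := fun i =>
    intervalIntegral_sub_eq_intervalIntegral_intervalIntegral ht
      (fun y _ r hr => (hg i y r hr.1).continuousWithinAt.mono Icc_subset_Ici_self)
      (fun y _ r hr => (hg i y r hr.1.le).hasDerivAt (Ici_mem_nhds hr.1)) (hd' i)
      (hgi i 0 le_rfl) (hgi i t ht)
  rw [← sub_eq_zero, ← Finset.sum_sub_distrib, Finset.sum_congr rfl fun i _ => hcell i,
    ← intervalIntegral.integral_finsetSum fun i _ =>
      intervalIntegrable_intervalIntegral_of_continuousOn (by rw [uIcc_of_le ht]; exact hd' i)]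
  rw [intervalIntegral.integral_congr fun r hr => hsum r (uIcc_of_le ht ▸ hr).1,
    intervalIntegral.integral_zero]

theorem dg_hamiltonian_conservation_general
    (n q : ℕ)
    (x : Fin (n + 2) → ℝ)
    (F F' : ℝ → ℝ)
    -- F is differentiable on [0,∞) with derivative F', F' continuous, and F ≥ 0
    (hFd : ∀ s ∈ Set.Ici (0 : ℝ), HasDerivWithinAt F (F' s) (Set.Ici (0 : ℝ)) s)
    (hF' : ContinuousOn F' (Set.Ici 0))
    (α₁ α₂ : ℝ)
    (uh wh uht wht : ℝ → Fin (n + 1) → Polynomial ℂ)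
    (hdegu : ∀ t : ℝ, 0 ≤ t → ∀ j, (uh t j).natDegree ≤ q)
    (hdegw : ∀ t : ℝ, 0 ≤ t → ∀ j, (wh t j).natDegree ≤ q)
    (hdegut : ∀ t : ℝ, 0 ≤ t → ∀ j, (uht t j).natDegree ≤ q)
    (hdegwt : ∀ t : ℝ, 0 ≤ t → ∀ j, (wht t j).natDegree ≤ q)
    -- u_h and w_h are continuously differentiable in time, with derivatives u_ht, w_ht
    (hderivu : ∀ t : ℝ, 0 ≤ t → ∀ j, ∀ y : ℝ,
      HasDerivWithinAt (fun s : ℝ => (uh s j).eval ((y : ℝ) : ℂ))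
        ((uht t j).eval ((y : ℝ) : ℂ)) (Set.Ici 0) t)
    (hderivw : ∀ t : ℝ, 0 ≤ t → ∀ j, ∀ y : ℝ,
      HasDerivWithinAt (fun s : ℝ => (wh s j).eval ((y : ℝ) : ℂ))
        ((wht t j).eval ((y : ℝ) : ℂ)) (Set.Ici 0) t)
    (hcontu : ∀ j, ∀ y : ℝ,
      ContinuousOn (fun t : ℝ => (uht t j).eval ((y : ℝ) : ℂ)) (Set.Ici 0))
    (hcontw : ∀ j, ∀ y : ℝ,
      ContinuousOn (fun t : ℝ => (wht t j).eval ((y : ℝ) : ℂ)) (Set.Ici 0))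
    -- first DG scheme equation, on each cell, for every test polynomial φ of degree ≤ q
    (scheme1 : ∀ t : ℝ, 0 ≤ t → ∀ j : Fin (n + 1), ∀ φ : Polynomial ℂ, φ.natDegree ≤ q →
      (∫ y in (x j.castSucc : ℝ)..(x j.succ : ℝ),
          Complex.I * (uht t j).eval ((y : ℝ) : ℂ) * φ.eval ((y : ℝ) : ℂ)
            + (wh t j).eval ((y : ℝ) : ℂ) * (φ.derivative.derivative).eval ((y : ℝ) : ℂ)
            + (uh t j).eval ((y : ℝ) : ℂ)
                * (F' (‖(uh t j).eval ((y : ℝ) : ℂ)‖ ^ 2) : ℂ)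
                * φ.eval ((y : ℝ) : ℂ)) =
        - fluxWx n x α₁ (wh t) j * φ.eval ((x j.succ : ℝ) : ℂ)
          + fluxWx n x α₁ (wh t) (j - 1) * φ.eval ((x j.castSucc : ℝ) : ℂ)
          + fluxWtilde n x α₂ (wh t) j * φ.derivative.eval ((x j.succ : ℝ) : ℂ)
          - fluxWtilde n x α₂ (wh t) (j - 1) * φ.derivative.eval ((x j.castSucc : ℝ) : ℂ))
    -- second DG scheme equation, on each cell, for every test polynomial ψ of degree ≤ q
    (scheme2 : ∀ t : ℝ, 0 ≤ t → ∀ j : Fin (n + 1), ∀ ψ : Polynomial ℂ, ψ.natDegree ≤ q →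
      (∫ y in (x j.castSucc : ℝ)..(x j.succ : ℝ),
          (wh t j).eval ((y : ℝ) : ℂ) * ψ.eval ((y : ℝ) : ℂ)
            - (uh t j).eval ((y : ℝ) : ℂ) * (ψ.derivative.derivative).eval ((y : ℝ) : ℂ)) =
        fluxUx n x α₂ (uh t) j * ψ.eval ((x j.succ : ℝ) : ℂ)
          - fluxUx n x α₂ (uh t) (j - 1) * ψ.eval ((x j.castSucc : ℝ) : ℂ)
          - fluxUhat n x α₁ (uh t) j * ψ.derivative.eval ((x j.succ : ℝ) : ℂ)
          + fluxUhat n x α₁ (uh t) (j - 1) * ψ.derivative.eval ((x j.castSucc : ℝ) : ℂ)) :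
    -- conclusion: conservation of the discrete Hamiltonian
    -- H_h(t) = ∫_I (|w_h|² + F(|u_h|²)) dx
    ∀ t : ℝ, 0 ≤ t →
      (∑ j : Fin (n + 1), ∫ y in (x j.castSucc : ℝ)..(x j.succ : ℝ),
          (‖(wh t j).eval ((y : ℝ) : ℂ)‖ ^ 2
            + F (‖(uh t j).eval ((y : ℝ) : ℂ)‖ ^ 2))) =
      ∑ j : Fin (n + 1), ∫ y in (x j.castSucc : ℝ)..(x j.succ : ℝ),
          (‖(wh 0 j).eval ((y : ℝ) : ℂ)‖ ^ 2
            + F (‖(uh 0 j).eval ((y : ℝ) : ℂ)‖ ^ 2)) := by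
  intro t ht
  have hjoint : ∀ p : ℝ → Fin (n + 1) → ℂ[X], (∀ r ≥ 0, ∀ j, (p r j).natDegree ≤ q) →
      (∀ j, ∀ y : ℝ, ContinuousOn (fun r => (p r j).eval (y : ℂ)) (Ici 0)) →
      ∀ j, ContinuousOn (fun z : ℝ × ℝ => (p z.1 j).eval (z.2 : ℂ)) (Ici 0 ×ˢ univ) :=
    fun p hp hc j => continuousOn_eval_prod (fun r hr => hp r hr j) (hc j)
  have hFc : ContinuousOn F (Ici 0) := fun σ hσ => (hFd σ hσ).continuousWithinAt
  exact sum_intervalIntegral_eq_of_sum_intervalIntegral_deriv_eq_zero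
    (g := fun j r y => hamiltonianDensity F ((uh r j).eval (y : ℂ)) ((wh r j).eval (y : ℂ)))
    (d := fun j r y => hamiltonianDensityRate F' ((uh r j).eval (y : ℂ))
      ((wh r j).eval (y : ℂ)) ((uht r j).eval (y : ℂ)) ((wht r j).eval (y : ℂ))) ht
    (fun j y r hr => (hderivu r hr j y).hamiltonianDensity hFd (hderivw r hr j y))
    (fun j => ContinuousOn.hamiltonianDensityRate hF'
      (hjoint uh hdegu (fun j y r hr => (hderivu r hr j y).continuousWithinAt) j)
      (hjoint wh hdegw (fun j y r hr => (hderivw r hr j y).continuousWithinAt) j)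
      (hjoint uht hdegut hcontu j) (hjoint wht hdegwt hcontw j))
    (fun j r _ => (Continuous.hamiltonianDensity hFc (continuous_eval_ofReal _)
      (continuous_eval_ofReal _)).intervalIntegrable _ _)
    (fun s hs => sum_integral_hamiltonianDensityRate_eq_zero hF' (hdegut s hs) (hdegw s hs)
      (scheme1 s hs) (SecondSchemeEq.of_hasDerivWithinAt (uniqueDiffOn_Ici 0 s hs) hs
        (fun k => hasDerivWithinAt_map_of_eval (fun r hr => hdegu r hr k) (hdegut s hs k) hs
          (hderivu s hs k))
        (fun k => hasDerivWithinAt_map_of_eval (fun r hr => hdegw r hr k) (hdegwt s hs k) hs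
          (hderivw s hs k)) scheme2))

/-- **Theorem 2.1, conservation of the discrete Hamiltonian**: if `(u_h, w_h)` is a
solution of the semi-discrete DG scheme for the nonlinear biharmonic Schrödinger equation
`i u_t + u_xxxx + u F'(|u|²) = 0` with numerical fluxes given by parameters
`α₁, α₂ ∈ [0,1]`, where `F : [0,∞) → ℝ` is differentiable with derivative `F'` and
`F ≥ 0`, and `t ↦ u_h(t), w_h(t)` are continuously differentiable in `t`, then the
discrete Hamiltonian `H_h(t) = ∫_I (|w_h(x,t)|² + F(|u_h(x,t)|²)) dx` satisfies
`H_h(t) = H_h(0)` for all `t ≥ 0`. -/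
theorem dg_hamiltonian_conservation
    (n q : ℕ) (hq : 1 ≤ q)
    (x : Fin (n + 2) → ℝ) (hx : StrictMono x)
    (F F' : ℝ → ℝ)
    -- F is differentiable on [0,∞) with derivative F', F' continuous, and F ≥ 0
    (hFd : ∀ s ∈ Set.Ici (0 : ℝ), HasDerivWithinAt F (F' s) (Set.Ici (0 : ℝ)) s)
    (hF' : ContinuousOn F' (Set.Ici 0))
    (hFnn : ∀ s ∈ Set.Ici (0 : ℝ), 0 ≤ F s)
    (α₁ α₂ : ℝ) (hα₁ : α₁ ∈ Set.Icc (0 : ℝ) 1) (hα₂ : α₂ ∈ Set.Icc (0 : ℝ) 1)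
    (uh wh uht wht : ℝ → Fin (n + 1) → Polynomial ℂ)
    (hdegu : ∀ t : ℝ, 0 ≤ t → ∀ j, (uh t j).natDegree ≤ q)
    (hdegw : ∀ t : ℝ, 0 ≤ t → ∀ j, (wh t j).natDegree ≤ q)
    (hdegut : ∀ t : ℝ, 0 ≤ t → ∀ j, (uht t j).natDegree ≤ q)
    (hdegwt : ∀ t : ℝ, 0 ≤ t → ∀ j, (wht t j).natDegree ≤ q)
    -- u_h and w_h are continuously differentiable in time, with derivatives u_ht, w_ht
    (hderivu : ∀ t : ℝ, 0 ≤ t → ∀ j, ∀ y : ℝ,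
      HasDerivWithinAt (fun s : ℝ => (uh s j).eval ((y : ℝ) : ℂ))
        ((uht t j).eval ((y : ℝ) : ℂ)) (Set.Ici 0) t)
    (hderivw : ∀ t : ℝ, 0 ≤ t → ∀ j, ∀ y : ℝ,
      HasDerivWithinAt (fun s : ℝ => (wh s j).eval ((y : ℝ) : ℂ))
        ((wht t j).eval ((y : ℝ) : ℂ)) (Set.Ici 0) t)
    (hcontu : ∀ j, ∀ y : ℝ,
      ContinuousOn (fun t : ℝ => (uht t j).eval ((y : ℝ) : ℂ)) (Set.Ici 0))
    (hcontw : ∀ j, ∀ y : ℝ,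
      ContinuousOn (fun t : ℝ => (wht t j).eval ((y : ℝ) : ℂ)) (Set.Ici 0))
    -- first DG scheme equation, on each cell, for every test polynomial φ of degree ≤ q
    (scheme1 : ∀ t : ℝ, 0 ≤ t → ∀ j : Fin (n + 1), ∀ φ : Polynomial ℂ, φ.natDegree ≤ q →
      (∫ y in (x j.castSucc : ℝ)..(x j.succ : ℝ),
          Complex.I * (uht t j).eval ((y : ℝ) : ℂ) * φ.eval ((y : ℝ) : ℂ)
            + (wh t j).eval ((y : ℝ) : ℂ) * (φ.derivative.derivative).eval ((y : ℝ) : ℂ)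
            + (uh t j).eval ((y : ℝ) : ℂ)
                * (F' (‖(uh t j).eval ((y : ℝ) : ℂ)‖ ^ 2) : ℂ)
                * φ.eval ((y : ℝ) : ℂ)) =
        - fluxWx n x α₁ (wh t) j * φ.eval ((x j.succ : ℝ) : ℂ)
          + fluxWx n x α₁ (wh t) (j - 1) * φ.eval ((x j.castSucc : ℝ) : ℂ)
          + fluxWtilde n x α₂ (wh t) j * φ.derivative.eval ((x j.succ : ℝ) : ℂ)
          - fluxWtilde n x α₂ (wh t) (j - 1) * φ.derivative.eval ((x j.castSucc : ℝ) : ℂ))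
    -- second DG scheme equation, on each cell, for every test polynomial ψ of degree ≤ q
    (scheme2 : ∀ t : ℝ, 0 ≤ t → ∀ j : Fin (n + 1), ∀ ψ : Polynomial ℂ, ψ.natDegree ≤ q →
      (∫ y in (x j.castSucc : ℝ)..(x j.succ : ℝ),
          (wh t j).eval ((y : ℝ) : ℂ) * ψ.eval ((y : ℝ) : ℂ)
            - (uh t j).eval ((y : ℝ) : ℂ) * (ψ.derivative.derivative).eval ((y : ℝ) : ℂ)) =
        fluxUx n x α₂ (uh t) j * ψ.eval ((x j.succ : ℝ) : ℂ)
          - fluxUx n x α₂ (uh t) (j - 1) * ψ.eval ((x j.castSucc : ℝ) : ℂ)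
          - fluxUhat n x α₁ (uh t) j * ψ.derivative.eval ((x j.succ : ℝ) : ℂ)
          + fluxUhat n x α₁ (uh t) (j - 1) * ψ.derivative.eval ((x j.castSucc : ℝ) : ℂ)) :
    -- conclusion: conservation of the discrete Hamiltonian
    -- H_h(t) = ∫_I (|w_h|² + F(|u_h|²)) dx
    ∀ t : ℝ, 0 ≤ t →
      (∑ j : Fin (n + 1), ∫ y in (x j.castSucc : ℝ)..(x j.succ : ℝ),
          (‖(wh t j).eval ((y : ℝ) : ℂ)‖ ^ 2
            + F (‖(uh t j).eval ((y : ℝ) : ℂ)‖ ^ 2))) =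
      ∑ j : Fin (n + 1), ∫ y in (x j.castSucc : ℝ)..(x j.succ : ℝ),
          (‖(wh 0 j).eval ((y : ℝ) : ℂ)‖ ^ 2
            + F (‖(uh 0 j).eval ((y : ℝ) : ℂ)‖ ^ 2)) :=
  dg_hamiltonian_conservation_general n q x F F' hFd hF' α₁ α₂ uh wh uht wht hdegu hdegw hdegut
    hdegwt hderivu hderivw hcontu hcontw scheme1 scheme2

end
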